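/- Suppose the disturbances have finite energy, i.e. there is a finite constant S_w with Σ_{k=0}^{T} ‖w_k‖² ≤ S_w for all T ∈ ℕ. Then the projected LMS one-step prediction errors x̃_{1|k} = D_k(θ* − θ̂_k) satisfy lim_{T→∞} (1/T) Σ_{k=0}^{T−1} (‖x̃_{1|k}‖ + ‖w_k‖) = 0. -/

import Mathlib

open Matrix Finset

/-- Euclidean norm of a vector in `ℝ^n`. -/
noncomputable def vnorm {n : ℕ} (v : Fin n → ℝ) : ℝ := Real.sqrt (∑ i, v i ^ 2)

/-- Spectral norm (ℓ²-operator norm) of a matrix. -/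
noncomputable def specNorm {n d : ℕ} (D : Matrix (Fin n) (Fin d) ℝ) : ℝ :=
  ‖LinearMap.toContinuousLinearMap (Matrix.toEuclideanLin D)‖

/-!
The squared estimation error `‖θ* - θ̂_k‖²` is a Lyapunov function. Projection onto the convex
set `Θ ∋ θ*` does not increase the distance to `θ*`, and under the gain condition `μ‖D_k‖² ≤ 1`
one LMS step lowers it by at least `μ‖x̃_{1|k}‖² - μ‖w_k‖²`. Telescoping, the prediction errors
have finite energy as well, so `‖x̃_{1|k}‖` and `‖w_k‖` tend to zero, and hence so does their
Cesàro mean.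
-/

open Filter Topology
open scoped RealInnerProductSpace InnerProduct

theorem sum_range_le_add_sum_of_le_sub_add {a b c : ℕ → ℝ} (ha : ∀ k, 0 ≤ a k)
    (h : ∀ k, a (k + 1) ≤ a k - b k + c k) (T : ℕ) :
    ∑ k ∈ range T, b k ≤ a 0 + ∑ k ∈ range T, c k := by
  have hb : ∑ k ∈ range T, b k ≤ ∑ k ∈ range T, (a k - a (k + 1) + c k) :=
    sum_le_sum fun k _ => by linarith [h k]
  rw [sum_add_distrib, sum_range_sub'] at hb
  linarith [ha T]

theorem tendsto_zero_of_sum_range_sq_le {f : ℕ → ℝ} {C : ℝ}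
    (h : ∀ T, ∑ k ∈ range T, f k ^ 2 ≤ C) : Tendsto f atTop (𝓝 0) := by
  have hsq : Tendsto (fun k => f k ^ 2) atTop (𝓝 0) :=
    (summable_of_sum_range_le (fun k => sq_nonneg (f k)) h).tendsto_atTop_zero
  rw [tendsto_zero_iff_abs_tendsto_zero]
  simpa only [Function.comp_def, Real.sqrt_sq_eq_abs, Real.sqrt_zero] using hsq.sqrt

section InnerProductSpace

variable {E F : Type*} [NormedAddCommGroup E] [InnerProductSpace ℝ E]
  [NormedAddCommGroup F] [InnerProductSpace ℝ F]

theorem Convex.norm_sub_le_of_forall_norm_sub_le {K : Set E} (hK : Convex ℝ K) {p q t : E}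
    (hp : p ∈ K) (hq : q ∈ K) (hmin : ∀ θ ∈ K, ‖q - t‖ ≤ ‖θ - t‖) :
    ‖p - q‖ ≤ ‖p - t‖ := by
  have : Nonempty K := ⟨⟨q, hq⟩⟩
  have hbdd : BddBelow (Set.range fun θ : K => ‖t - θ‖) :=
    ⟨0, Set.forall_mem_range.2 fun _ => norm_nonneg _⟩
  have hinf : ‖t - q‖ = ⨅ θ : K, ‖t - θ‖ :=
    le_antisymm (le_ciInf fun θ => by simpa only [norm_sub_rev t] using hmin θ θ.2)
      (ciInf_le hbdd ⟨q, hq⟩)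
  have hvar := (norm_eq_iInf_iff_real_inner_le_zero hK hq).1 hinf p hp
  have hexp : ‖p - t‖ ^ 2 = ‖p - q‖ ^ 2 - 2 * ⟪p - q, t - q⟫ + ‖t - q‖ ^ 2 := by
    rw [← norm_sub_sq_real, sub_sub_sub_cancel_right]
  refine (pow_le_pow_iff_left₀ (norm_nonneg _) (norm_nonneg _) two_ne_zero).1 ?_
  rw [hexp, real_inner_comm]
  nlinarith [sq_nonneg ‖t - q‖]

variable [CompleteSpace E] [CompleteSpace F]

open ContinuousLinearMap in
theorem norm_sub_smul_adjoint_sq_le (A : E →L[ℝ] F) {μ : ℝ} (hμ : 0 ≤ μ)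
    (hA : μ * ‖A‖ ^ 2 ≤ 1) (e : E) (w : F) :
    ‖e - μ • (A†) (A e + w)‖ ^ 2 ≤ ‖e‖ ^ 2 - μ * ‖A e‖ ^ 2 + μ * ‖w‖ ^ 2 := by
  set z := A e + w
  have hinner : ⟪e, (A†) z⟫ = ‖A e‖ ^ 2 + ⟪A e, w⟫ := by
    rw [adjoint_inner_right, inner_add_right, real_inner_self_eq_norm_sq]
  have hz : ‖z‖ ^ 2 = ‖A e‖ ^ 2 + 2 * ⟪A e, w⟫ + ‖w‖ ^ 2 := norm_add_sq_real _ _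
  have hadj : μ ^ 2 * ‖(A†) z‖ ^ 2 ≤ μ * ‖z‖ ^ 2 :=
    calc μ ^ 2 * ‖(A†) z‖ ^ 2 ≤ μ ^ 2 * (‖A‖ * ‖z‖) ^ 2 := by
          gcongr
          simpa only [LinearIsometryEquiv.norm_map] using (A†).le_opNorm z
      _ = μ * ‖A‖ ^ 2 * (μ * ‖z‖ ^ 2) := by ring
      _ ≤ μ * ‖z‖ ^ 2 := mul_le_of_le_one_left (by positivity) hA
  rw [norm_sub_sq_real, inner_smul_right, norm_smul, mul_pow, Real.norm_eq_abs, sq_abs,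
    hinner]
  nlinarith

end InnerProductSpace

theorem vnorm_eq_norm_toLp {n : ℕ} (v : Fin n → ℝ) : vnorm v = ‖WithLp.toLp 2 v‖ := by
  simp [vnorm, EuclideanSpace.norm_eq]

theorem vnorm_sub_le_of_forall_vnorm_sub_le {d : ℕ} {Θ : Set (Fin d → ℝ)} (hΘ : Convex ℝ Θ)
    {p q t : Fin d → ℝ} (hp : p ∈ Θ) (hq : q ∈ Θ)
    (hmin : ∀ θ ∈ Θ, vnorm (q - t) ≤ vnorm (θ - t)) :
    vnorm (p - q) ≤ vnorm (p - t) := by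
  have hK : Convex ℝ (WithLp.ofLp ⁻¹' Θ : Set (EuclideanSpace ℝ (Fin d))) :=
    hΘ.linear_preimage (WithLp.linearEquiv 2 ℝ (Fin d → ℝ)).toLinearMap
  simp only [vnorm_eq_norm_toLp, WithLp.toLp_sub] at hmin ⊢
  exact hK.norm_sub_le_of_forall_norm_sub_le hp hq fun θ hθ => hmin θ.ofLp hθ

theorem vnorm_sub_smul_transpose_mulVec_sq_le {n d : ℕ} (D : Matrix (Fin n) (Fin d) ℝ) {μ : ℝ}
    (hμ : 0 ≤ μ) (hD : μ * specNorm D ^ 2 ≤ 1) (e : Fin d → ℝ) (w : Fin n → ℝ) :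
    vnorm (e - μ • Dᵀ *ᵥ (D *ᵥ e + w)) ^ 2 ≤
      vnorm e ^ 2 - μ * vnorm (D *ᵥ e) ^ 2 + μ * vnorm w ^ 2 := by
  set A := LinearMap.toContinuousLinearMap (toEuclideanLin D)
  have hA : ∀ v, WithLp.toLp 2 (D *ᵥ v) = A (WithLp.toLp 2 v) := fun _ => rfl
  have hAt : ∀ z, WithLp.toLp 2 (Dᵀ *ᵥ z) = (A†) (WithLp.toLp 2 z) := by
    intro z
    rw [← LinearMap.adjoint_toContinuousLinearMap, ← toEuclideanLin_conjTranspose_eq_adjoint,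
      conjTranspose_eq_transpose_of_trivial]
    rfl
  simp only [vnorm_eq_norm_toLp, WithLp.toLp_sub, WithLp.toLp_smul, WithLp.toLp_add, hA, hAt]
  exact norm_sub_smul_adjoint_sq_le A hμ hD _ _

theorem lms_prediction_error_average_tendsto_zero_general
    {d n : ℕ}
    (Θ : Set (Fin d → ℝ)) (hΘconv : Convex ℝ Θ)
    (θstar : Fin d → ℝ) (hθstar : θstar ∈ Θ)
    (μ : ℝ) (hμ : 0 < μ)
    (D : ℕ → Matrix (Fin n) (Fin d) ℝ) (hD : ∀ k, μ * specNorm (D k) ^ 2 ≤ 1)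
    (w : ℕ → (Fin n → ℝ))
    (θhat θtil : ℕ → (Fin d → ℝ))
    (hupd : ∀ k, θtil (k + 1) =
      θhat k + μ • (D k)ᵀ.mulVec ((D k).mulVec (θstar - θhat k) + w k))
    (hproj_mem : ∀ k, θhat (k + 1) ∈ Θ)
    (hproj : ∀ k, ∀ θ ∈ Θ, vnorm (θhat (k + 1) - θtil (k + 1)) ≤ vnorm (θ - θtil (k + 1)))
    (Sw : ℝ) (hSw : ∀ T : ℕ, ∑ k ∈ Finset.range (T + 1), vnorm (w k) ^ 2 ≤ Sw) :
    Filter.Tendsto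
      (fun T : ℕ => (1 / (T : ℝ)) *
        ∑ k ∈ Finset.range T, (vnorm ((D k).mulVec (θstar - θhat k)) + vnorm (w k)))
      Filter.atTop (nhds 0) := by
  set e := fun k => θstar - θhat k
  have hdescent : ∀ k, vnorm (e (k + 1)) ^ 2 ≤
      vnorm (e k) ^ 2 - μ * vnorm (D k *ᵥ e k) ^ 2 + μ * vnorm (w k) ^ 2 := fun k =>
    calc vnorm (e (k + 1)) ^ 2 ≤ vnorm (θstar - θtil (k + 1)) ^ 2 :=
          pow_le_pow_left₀ (Real.sqrt_nonneg _)
            (vnorm_sub_le_of_forall_vnorm_sub_le hΘconv hθstar (hproj_mem k) (hproj k)) 2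
      _ = vnorm (e k - μ • (D k)ᵀ *ᵥ (D k *ᵥ e k + w k)) ^ 2 := by
          rw [hupd k, sub_add_eq_sub_sub]
      _ ≤ _ := vnorm_sub_smul_transpose_mulVec_sq_le (D k) hμ.le (hD k) _ _
  have hw : ∀ T, ∑ k ∈ range T, vnorm (w k) ^ 2 ≤ Sw := fun T =>
    (sum_le_sum_of_subset_of_nonneg (range_subset_range.2 T.le_succ)
      fun _ _ _ => sq_nonneg _).trans (hSw T)
  have hx : ∀ T, ∑ k ∈ range T, vnorm (D k *ᵥ e k) ^ 2 ≤ vnorm (e 0) ^ 2 / μ + Sw := by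
    intro T
    have htel := sum_range_le_add_sum_of_le_sub_add (fun k => sq_nonneg (vnorm (e k))) hdescent T
    rw [← mul_sum, ← mul_sum] at htel
    rw [div_add' _ _ _ hμ.ne', le_div_iff₀ hμ]
    nlinarith [mul_le_mul_of_nonneg_left (hw T) hμ.le]
  simpa only [one_div, add_zero] using
    ((tendsto_zero_of_sum_range_sq_le hx).add (tendsto_zero_of_sum_range_sq_le hw)).cesaro

/-- asymptotic convergence of the averaged prediction error
under finite-energy disturbances. -/
theorem lms_prediction_error_average_tendsto_zero
    {d n : ℕ} (hd : 1 ≤ d) (hn : 1 ≤ n)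
    (Θ : Set (Fin d → ℝ)) (hΘne : Θ.Nonempty) (hΘcomp : IsCompact Θ) (hΘconv : Convex ℝ Θ)
    (θstar : Fin d → ℝ) (hθstar : θstar ∈ Θ)
    (μ : ℝ) (hμ : 0 < μ)
    (D : ℕ → Matrix (Fin n) (Fin d) ℝ) (hD : ∀ k, μ * specNorm (D k) ^ 2 ≤ 1)
    (w : ℕ → (Fin n → ℝ))
    (θhat θtil : ℕ → (Fin d → ℝ))
    (hθ0 : θhat 0 ∈ Θ)
    (hupd : ∀ k, θtil (k + 1) =
      θhat k + μ • (D k)ᵀ.mulVec ((D k).mulVec (θstar - θhat k) + w k))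
    (hproj_mem : ∀ k, θhat (k + 1) ∈ Θ)
    (hproj : ∀ k, ∀ θ ∈ Θ, vnorm (θhat (k + 1) - θtil (k + 1)) ≤ vnorm (θ - θtil (k + 1)))
    (Sw : ℝ) (hSw : ∀ T : ℕ, ∑ k ∈ Finset.range (T + 1), vnorm (w k) ^ 2 ≤ Sw) :
    Filter.Tendsto
      (fun T : ℕ => (1 / (T : ℝ)) *
        ∑ k ∈ Finset.range T, (vnorm ((D k).mulVec (θstar - θhat k)) + vnorm (w k)))
      Filter.atTop (nhds 0) :=
  lms_prediction_error_average_tendsto_zero_general Θ hΘconv θstar hθstar μ hμ D hD w θhat θtil hupd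
    hproj_mem hproj Sw hSw
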